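/- arXiv:1711.06293 — 2 statements merged into one kernel-verified Lean document; each statement's English description precedes it below -/
import Mathlib

section
/- Let D be a digraph with n vertices and girth g, and let P(D;x) be its dichromatic (chromatic) polynomial. Then the coefficients of x^{n−1}, x^{n−2}, ..., x^{n−g+2} in P(D;x) are zero, and the coefficient of x^{n−g+1} equals the negative of the number of directed cycles of length g in D. -/
variable {V : Type*}

/-- A directed cycle in a digraph `D`, given as an injective map `Fin m → V`
(`m ≥ 2`) whose consecutive images (cyclically) are edges of `D`. -/
def IsCycleFun (D : V → V → Prop) {m : ℕ} (f : Fin m → V) : Prop :=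
  2 ≤ m ∧ Function.Injective f ∧ ∀ i : Fin m, D (f i) (f (finRotate m i))

/-- The set `S` contains a directed cycle of `D`. -/
def HasCycleIn (D : V → V → Prop) (S : Set V) : Prop :=
  ∃ (m : ℕ) (f : Fin m → V), IsCycleFun D f ∧ ∀ i, f i ∈ S

/-- Out-degree of a vertex. -/
noncomputable def outDeg (D : V → V → Prop) (v : V) : ℕ := Nat.card {u | D v u}

/-- In-degree of a vertex. -/
noncomputable def inDeg (D : V → V → Prop) (v : V) : ℕ := Nat.card {u | D u v}

/-- A coloring of the vertices of `D` with no monochromatic directed cycle. -/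
def ProperColoring (D : V → V → Prop) {k : ℕ} (c : V → Fin k) : Prop :=
  ∀ (m : ℕ) (f : Fin m → V), IsCycleFun D f → ∃ i j, c (f i) ≠ c (f j)

/-- The number of proper `k`-colorings of `D` (value of the dichromatic polynomial). -/
noncomputable def numColorings (V : Type*) (D : V → V → Prop) (k : ℕ) : ℕ :=
  Nat.card {c : V → Fin k // ProperColoring D c}

/-- The finset `S` carries a (Hamiltonian on `S`) directed cycle of `D`. -/
def IsCycleSet (D : V → V → Prop) (S : Finset V) : Prop :=
  2 ≤ S.card ∧ ∃ f : Fin S.card ≃ {x // x ∈ S},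
    ∀ i, D (f i) (f (finRotate S.card i))

/-- The finset `S` induces exactly a directed cycle of `D`. -/
def IsInducedCycleSet (D : V → V → Prop) (S : Finset V) : Prop :=
  2 ≤ S.card ∧ ∃ f : Fin S.card ≃ {x // x ∈ S},
    (∀ i, D (f i) (f (finRotate S.card i))) ∧
    ∀ a b : {x // x ∈ S}, D (a : V) b → ∃ i, f i = a ∧ f (finRotate S.card i) = b

/-- `D` has girth `g` : it has a directed cycle of length `g` and no shorter one. -/
def HasGirth (D : V → V → Prop) (g : ℕ) : Prop :=
  (∃ f : Fin g → V, IsCycleFun D f) ∧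
    ∀ (m : ℕ) (f : Fin m → V), IsCycleFun D f → g ≤ m



/-!
By inclusion–exclusion over the family `C` of vertex sets of directed cycles,
`P(D; x) = ∑_{T ⊆ C} (-1)^|T| x^q(T)`, where `q(T)` is the number of blocks of the partition of
`V` generated by the members of `T`. Now `q(∅) = n` and `q({S}) = n - |S| + 1`, while two distinct
members of `C`, each of size at least `g ≥ 2`, have a union of at least `g + 1` vertices lying
in one block if they meet, and of at least `2g` vertices lying in two blocks otherwise; either way
`q(T) ≤ n - g` once `|T| ≥ 2`. Hence in degrees `n - g + 1, …, n - 1` only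
singletons `{S}` with `|S| = g` contribute, each with sign `-1`.
-/

open Finset Polynomial

section Blocks

def IsMonochromatic {α : Type*} (c : V → α) (S : Finset V) : Prop :=
  ∀ a ∈ S, ∀ b ∈ S, c a = c b

def blockRel (T : Finset (Finset V)) (a b : V) : Prop := ∃ S ∈ T, a ∈ S ∧ b ∈ S

noncomputable def numBlocks (T : Finset (Finset V)) : ℕ := Nat.card (Quot (blockRel T))

def quotBlockRelArrowEquiv (T : Finset (Finset V)) (α : Type*) :
    (Quot (blockRel T) → α) ≃ {c : V → α // ∀ S ∈ T, IsMonochromatic c S} where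
  toFun φ :=
    ⟨φ ∘ Quot.mk _, fun S hS _ ha _ hb => congrArg φ (Quot.sound ⟨S, hS, ha, hb⟩)⟩
  invFun c := Quot.lift c.1 fun _ _ ⟨S, hS, ha, hb⟩ => c.2 S hS _ ha _ hb
  left_inv _ := funext <| Quot.ind fun _ => rfl
  right_inv _ := rfl

variable [Fintype V]

theorem card_forall_isMonochromatic (T : Finset (Finset V)) (α : Type*) :
    Nat.card {c : V → α // ∀ S ∈ T, IsMonochromatic c S} = Nat.card α ^ numBlocks T := by
  rw [← Nat.card_congr (quotBlockRelArrowEquiv T α), Nat.card_fun, numBlocks]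

theorem numBlocks_empty : numBlocks (∅ : Finset (Finset V)) = Fintype.card V := by
  rw [numBlocks, ← Nat.card_eq_fintype_card]
  refine Nat.card_congr
    { toFun := Quot.lift id fun _ _ ⟨_, hS, _⟩ => absurd hS (notMem_empty _)
      invFun := Quot.mk _
      left_inv := Quot.ind fun _ => rfl
      right_inv := fun _ => rfl }

theorem card_subtype_notMem (S : Finset V) :
    Nat.card {v // v ∉ S} = Fintype.card V - #S := by
  classical
  rw [Nat.card_eq_fintype_card, Fintype.card_subtype_compl, Fintype.card_coe]

theorem numBlocks_singleton {S : Finset V} (hS : S.Nonempty) :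
    numBlocks ({S} : Finset (Finset V)) = Fintype.card V - #S + 1 := by
  classical
  obtain ⟨s, hs⟩ := hS
  rw [numBlocks, ← card_subtype_notMem, ← Finite.card_option]
  refine Nat.card_congr
    { toFun := Quot.lift (fun v => if h : v ∈ S then none else some ⟨v, h⟩) ?_
      invFun := fun o => o.elim (Quot.mk _ s) (Quot.mk _ ·.1)
      left_inv := Quot.ind fun v => ?_
      right_inv := fun o => ?_ }
  · rintro a b ⟨_, hS, ha, hb⟩
    rw [mem_singleton.mp hS] at ha hb
    simp [ha, hb]
  · by_cases hv : v ∈ S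
    · simpa [hv] using Quot.sound ⟨S, mem_singleton_self S, hs, hv⟩
    · simp [hv]
  · cases o with
    | none => simp [hs]
    | some v => simp [v.2]

theorem numBlocks_le_of_forall_blockRel (T : Finset (Finset V)) (U R : Finset V)
    (hR : ∀ u ∈ U, ∃ r ∈ R, blockRel T r u) :
    numBlocks T ≤ Fintype.card V - #U + #R := by
  have hsurj : Function.Surjective
      (Sum.elim (fun v : {v // v ∉ U} => Quot.mk (blockRel T) v.1)
        fun r : R => Quot.mk _ r.1) := by
    refine Quot.ind fun v => ?_
    by_cases hv : v ∈ U
    · obtain ⟨r, hr, hrv⟩ := hR v hv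
      exact ⟨.inr ⟨r, hr⟩, Quot.sound hrv⟩
    · exact ⟨.inl ⟨v, hv⟩, rfl⟩
  have := Nat.card_le_card_of_surjective _ hsurj
  rwa [Nat.card_sum, card_subtype_notMem, Nat.card_eq_finsetCard] at this

theorem numBlocks_add_le_card {T : Finset (Finset V)} {S₁ S₂ : Finset V} (h₁ : S₁ ∈ T)
    (h₂ : S₂ ∈ T) (hne : S₁ ≠ S₂) {g : ℕ} (hg : 2 ≤ g) (hg₁ : g ≤ #S₁)
    (hg₂ : g ≤ #S₂) :
    numBlocks T + g ≤ Fintype.card V := by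
  classical
  have hU : #(S₁ ∪ S₂) ≤ Fintype.card V := card_le_univ _
  by_cases hinter : (S₁ ∩ S₂).Nonempty
  · obtain ⟨w, hw⟩ := hinter
    rw [mem_inter] at hw
    have hle := numBlocks_le_of_forall_blockRel T (S₁ ∪ S₂) {w} fun u hu => by
      rcases mem_union.mp hu with hu | hu
      exacts [⟨w, mem_singleton_self w, S₁, h₁, hw.1, hu⟩,
        ⟨w, mem_singleton_self w, S₂, h₂, hw.2, hu⟩]
    have hlt : g < #(S₁ ∪ S₂) := by
      by_cases hsub : S₂ ⊆ S₁
      · have := card_lt_card (hsub.ssubset_of_ne hne.symm)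
        have := card_le_card (subset_union_left (s₁ := S₁) (s₂ := S₂))
        omega
      · have := card_lt_card (Finset.ssubset_iff_subset_ne.mpr
          ⟨subset_union_left, fun h => hsub (union_eq_left.mp h.symm)⟩)
        omega
    rw [card_singleton] at hle
    omega
  · obtain ⟨w₁, hw₁⟩ := card_pos.mp (by omega : 0 < #S₁)
    obtain ⟨w₂, hw₂⟩ := card_pos.mp (by omega : 0 < #S₂)
    have hle := numBlocks_le_of_forall_blockRel T (S₁ ∪ S₂) {w₁, w₂} fun u hu => by
      rcases mem_union.mp hu with hu | hu
      exacts [⟨w₁, by simp, S₁, h₁, hw₁, hu⟩,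
        ⟨w₂, by simp, S₂, h₂, hw₂, hu⟩]
    have := card_le_two (a := w₁) (b := w₂)
    rw [card_union_of_disjoint (disjoint_iff_ne.mpr fun a ha b hb hab =>
      hinter ⟨a, mem_inter.mpr ⟨ha, hab ▸ hb⟩⟩)] at hU hle
    omega

end Blocks

section ColorPoly

variable [Fintype V]

noncomputable def colorPoly (C : Finset (Finset V)) : ℚ[X] :=
  ∑ T ∈ C.powerset, Polynomial.C ((-1) ^ #T) * X ^ numBlocks T

theorem eval_colorPoly (C : Finset (Finset V)) (α : Type*) [Fintype α] :
    (colorPoly C).eval (Fintype.card α : ℚ) =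
      Nat.card {c : V → α // ∀ S ∈ C, ¬ IsMonochromatic c S} := by
  classical
  have hcard {P : (V → α) → Prop} {s : Finset (V → α)} (hs : ∀ c, c ∈ s ↔ P c) :
      #s = Nat.card {c // P c} := by
    rw [← Nat.card_eq_finsetCard]
    exact Nat.card_congr (Equiv.subtypeEquivRight hs)
  have key :=
    inclusion_exclusion_card_inf_compl C fun S => {c : V → α | IsMonochromatic c S}
  rw [hcard (P := fun c => ∀ S ∈ C, ¬ IsMonochromatic c S) (by simp [mem_inf]),
    sum_congr rfl fun t _ => by
      rw [hcard (P := fun c => ∀ S ∈ t, IsMonochromatic c S) (by simp [mem_inf]),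
        card_forall_isMonochromatic, Nat.card_eq_fintype_card]] at key
  simp only [colorPoly, eval_finsetSum, eval_mul, eval_C, eval_pow, eval_X]
  exact_mod_cast key.symm

theorem coeff_colorPoly (C : Finset (Finset V)) {g j : ℕ} (hg : 2 ≤ g)
    (hC : ∀ S ∈ C, g ≤ #S) (hj : Fintype.card V < j + g) (hjn : j < Fintype.card V) :
    (colorPoly C).coeff j = -#{S ∈ C | #S + j = Fintype.card V + 1} := by
  classical
  have hterm (T : Finset (Finset V)) :
      (Polynomial.C ((-1 : ℚ) ^ #T) * X ^ numBlocks T).coeff j =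
        if j = numBlocks T then (-1) ^ #T else 0 :=
    coeff_C_mul_X_pow _ _ _
  have hsingle : C.powersetCard 1 ⊆ C.powerset := fun T hT =>
    mem_powerset.mpr (mem_powersetCard.mp hT).1
  rw [colorPoly, finsetSum_coeff, sum_congr rfl fun T _ => hterm T, ← sum_subset hsingle ?_,
    powersetCard_one, sum_map]
  · simp only [Function.Embedding.coeFn_mk, card_singleton, pow_one]
    rw [← sum_filter, sum_const, nsmul_eq_mul, mul_neg_one]
    congr 3
    refine filter_congr fun S hS => ?_
    have hS₁ := hC S hS
    have hS₂ : #S ≤ Fintype.card V := card_le_univ S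
    rw [numBlocks_singleton (card_pos.mp (by omega))]
    omega
  · intro T hT hT1
    rw [mem_powerset] at hT
    have hT1 : #T ≠ 1 := fun h => hT1 (mem_powersetCard.mpr ⟨hT, h⟩)
    rw [if_neg]
    obtain hT0 | hT2 : #T = 0 ∨ 1 < #T := by omega
    · rw [card_eq_zero.mp hT0, numBlocks_empty]
      omega
    · obtain ⟨S₁, h₁, S₂, h₂, hne⟩ := one_lt_card.mp hT2
      have := numBlocks_add_le_card h₁ h₂ hne hg (hC S₁ (hT h₁)) (hC S₂ (hT h₂))
      omega

end ColorPoly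

section Digraph

variable {D : V → V → Prop}

theorem finCongr_finRotate {a b : ℕ} (h : a = b) (i : Fin a) :
    finCongr h (finRotate a i) = finRotate b (finCongr h i) := by
  subst h; rfl

theorem IsCycleFun.isCycleSet_image [DecidableEq V] {m : ℕ} {f : Fin m → V}
    (hf : IsCycleFun D f) : IsCycleSet D (univ.image f) := by
  obtain ⟨hm, hinj, hD⟩ := hf
  have hcard : #(univ.image f) = m := by
    rw [card_image_of_injective _ hinj, card_univ, Fintype.card_fin]
  let e : Fin m ≃ univ.image f :=
    Equiv.ofBijective (fun i => ⟨f i, mem_image_of_mem f (mem_univ i)⟩)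
      ⟨fun i j h => hinj (congrArg Subtype.val h), fun ⟨v, hv⟩ => by
        obtain ⟨i, -, rfl⟩ := mem_image.mp hv
        exact ⟨i, rfl⟩⟩
  refine ⟨hcard.symm ▸ hm, (finCongr hcard).trans e, fun i => ?_⟩
  rw [Equiv.trans_apply, Equiv.trans_apply, finCongr_finRotate]
  exact hD _

theorem IsCycleSet.exists_isCycleFun {S : Finset V} (hS : IsCycleSet D S) :
    ∃ f : Fin #S → V, IsCycleFun D f ∧ ∀ i, f i ∈ S := by
  obtain ⟨h2, e, he⟩ := hS
  exact ⟨fun i => e i, ⟨h2, fun i j h => e.injective (Subtype.ext h), he⟩, fun i => (e i).2⟩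

theorem HasGirth.le_card {g : ℕ} (hg : HasGirth D g) {S : Finset V} (hS : IsCycleSet D S) :
    g ≤ #S := by
  obtain ⟨f, hf, -⟩ := hS.exists_isCycleFun
  exact hg.2 _ f hf

variable [Fintype V]

theorem HasGirth.le_card_univ {g : ℕ} (hg : HasGirth D g) : g ≤ Fintype.card V := by
  obtain ⟨f, hf⟩ := hg.1
  simpa using Fintype.card_le_of_injective f hf.2.1

open Classical in
noncomputable def cycleSets (D : V → V → Prop) : Finset (Finset V) := {S | IsCycleSet D S}

theorem mem_cycleSets {S : Finset V} : S ∈ cycleSets D ↔ IsCycleSet D S := by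
  simp [cycleSets]

theorem properColoring_iff {k : ℕ} (c : V → Fin k) :
    ProperColoring D c ↔ ∀ S ∈ cycleSets D, ¬ IsMonochromatic c S := by
  classical
  refine ⟨fun hc S hS hmono => ?_, fun h m f hf => ?_⟩
  · obtain ⟨f, hf, hfS⟩ := (mem_cycleSets.mp hS).exists_isCycleFun
    obtain ⟨i, j, hij⟩ := hc _ f hf
    exact hij (hmono _ (hfS i) _ (hfS j))
  · by_contra! hmono
    refine h _ (mem_cycleSets.mpr hf.isCycleSet_image) fun a ha b hb => ?_
    obtain ⟨i, -, rfl⟩ := mem_image.mp ha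
    obtain ⟨j, -, rfl⟩ := mem_image.mp hb
    exact hmono i j

theorem numColorings_eq_eval_colorPoly (k : ℕ) :
    (numColorings V D k : ℚ) = (colorPoly (cycleSets D)).eval (k : ℚ) := by
  have := eval_colorPoly (cycleSets D) (Fin k)
  rw [Fintype.card_fin] at this
  rw [this, numColorings]
  simp_rw [properColoring_iff]

end Digraph

theorem stmt_15_general {V : Type*} [Fintype V] (D : V → V → Prop)
    (n g : ℕ) (hn : n = Fintype.card V) (hg : HasGirth D g)
    (Q : Polynomial ℚ)
    (hQ : ∀ k : ℕ, 0 < k → Q.eval (k : ℚ) = (numColorings V D k : ℚ)) :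
    (∀ j : ℕ, n - g + 2 ≤ j → j ≤ n - 1 → Q.coeff j = 0) ∧
    Q.coeff (n - g + 1) =
      -(Nat.card {S : Finset V // S.card = g ∧ IsCycleSet D S} : ℚ) := by
  subst hn
  have hg2 : 2 ≤ g := hg.1.choose_spec.1
  have hgn := hg.le_card_univ
  have hgirth (S) (hS : S ∈ cycleSets D) : g ≤ #S := hg.le_card (mem_cycleSets.mp hS)
  have hQP : Q = colorPoly (cycleSets D) := by
    refine eq_of_infinite_eval_eq _ _ (Set.infinite_of_injective_forall_mem
      (f := fun k : ℕ => ((k + 1 : ℕ) : ℚ)) (fun a b h => by simpa using h) fun k => ?_)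
    rw [Set.mem_ofPred_eq, hQ _ k.succ_pos, numColorings_eq_eval_colorPoly]
  refine ⟨fun j hj₁ hj₂ => ?_, ?_⟩
  · rw [hQP, coeff_colorPoly _ hg2 hgirth (by omega) (by omega), neg_eq_zero,
      Nat.cast_eq_zero, card_eq_zero, filter_eq_empty_iff]
    intro S hS
    have := hgirth S hS
    omega
  · rw [hQP, coeff_colorPoly _ hg2 hgirth (by omega) (by omega), ← Nat.card_eq_finsetCard]
    refine congrArg _ (congrArg _ (Nat.card_congr (Equiv.subtypeEquivRight fun S => ?_)))
    rw [mem_filter, mem_cycleSets]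
    exact and_comm.trans (and_congr_left' (by omega))

/-- In the dichromatic polynomial of a digraph D with n vertices and girth g, the
coefficients of x^(n−1), …, x^(n−g+2) vanish, and the coefficient of x^(n−g+1)
is minus the number of directed cycles of length g. -/
theorem stmt_15 {V : Type*} [Fintype V] (D : V → V → Prop) (hloopless : ∀ v, ¬ D v v)
    (n g : ℕ) (hn : n = Fintype.card V) (hg : HasGirth D g)
    (Q : Polynomial ℚ)
    (hQ : ∀ k : ℕ, 0 < k → Q.eval (k : ℚ) = (numColorings V D k : ℚ)) :
    (∀ j : ℕ, n - g + 2 ≤ j → j ≤ n - 1 → Q.coeff j = 0) ∧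
    Q.coeff (n - g + 1) =
      -(Nat.card {S : Finset V // S.card = g ∧ IsCycleSet D S} : ℚ) :=
  stmt_15_general D n g hn hg Q hQ
end

section
/- Let D_n be the tournament on vertices v_1,...,v_n where for all 1 ≤ i < j ≤ n with (i,j) ≠ (1,n) the edge goes from v_i to v_j, and the edge between v_1 and v_n goes from v_n to v_1. Then for every positive integer k, P_{v_1≈v_n}(D_n;k) = k(k−1)^{n−2}, P_{v_1≉v_n}(D_n;k) = k^{n−1}(k−1), and P(D_n;k) = k(k−1)^{n−2} + k^{n−1}(k−1). -/
variable {V : Type*}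

/-- The tournament Dₙ: all edges vᵢ → vⱼ for i < j, except the edge between v₁ and vₙ
which is oriented vₙ → v₁ (0-indexed on Fin n). -/
def DnAdj (n : ℕ) (a b : Fin n) : Prop :=
  (a.1 < b.1 ∧ ¬ (a.1 = 0 ∧ b.1 = n - 1)) ∨ (a.1 = n - 1 ∧ b.1 = 0)

/-! ### Auxiliary lemmas -/

lemma finRotate_ne_self' {m : ℕ} (hm : 2 ≤ m) (i : Fin m) : finRotate m i ≠ i := by
  obtain ⟨m', rfl⟩ : ∃ m', m = m' + 2 := ⟨m - 2, by omega⟩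
  rw [finRotate_succ_apply]
  intro h
  have h2 := congrArg Fin.val h
  rw [Fin.add_def] at h2
  simp only [Fin.val_one] at h2
  have hi := i.isLt
  rcases Nat.lt_or_ge (i.1 + 1) (m' + 2) with h' | h'
  · rw [Nat.mod_eq_of_lt h'] at h2; omega
  · have he : i.1 + 1 = m' + 2 := by omega
    rw [he, Nat.mod_self] at h2; omega

lemma properColoring_DnAdj_iff {n k : ℕ} (hn : 2 ≤ n) (c : Fin n → Fin k) :
    ProperColoring (DnAdj n) c ↔
      ¬ (c ⟨n - 1, by omega⟩ = c ⟨0, by omega⟩ ∧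
         ∃ i : Fin n, i.1 ≠ 0 ∧ i.1 ≠ n - 1 ∧ c i = c ⟨0, by omega⟩) := by
  constructor
  · intro hp
    rintro ⟨h1, i, hi0, hi1, hic⟩
    have hcyc : IsCycleFun (DnAdj n) ![⟨0, by omega⟩, i, ⟨n - 1, by omega⟩] := by
      refine ⟨by omega, ?_, ?_⟩
      · intro a b hab
        fin_cases a <;> fin_cases b <;> simp_all [Fin.ext_iff] <;> omega
      · intro j
        fin_cases j <;>
          simp [DnAdj, Fin.ext_iff] <;> omega
    obtain ⟨a, b, hab⟩ := hp 3 _ hcyc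
    apply hab
    have hall : ∀ j : Fin 3, (fun v => c (![⟨0, by omega⟩, i, ⟨n - 1, by omega⟩] v)) j
        = c ⟨0, by omega⟩ := by
      intro j; fin_cases j <;> simp [hic, h1]
    exact (hall a).trans (hall b).symm
  · intro h m f hf
    by_contra hc
    push_neg at hc
    obtain ⟨hm, hinj, hedge⟩ := hf
    have : Nonempty (Fin m) := ⟨⟨0, by omega⟩⟩
    obtain ⟨i0, hi0⟩ := Finite.exists_max (fun i => (f i).1)
    have hrot : finRotate m i0 ≠ i0 := finRotate_ne_self' hm i0
    have hlt : (f (finRotate m i0)).1 < (f i0).1 := by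
      have h1 := hi0 (finRotate m i0)
      have h2 : (f (finRotate m i0)).1 ≠ (f i0).1 :=
        fun he => hrot (hinj (Fin.ext he))
      omega
    rcases hedge i0 with ⟨h1, _⟩ | ⟨ha, hb⟩
    · omega
    have hfi0 : f i0 = ⟨n - 1, by omega⟩ := Fin.ext ha
    have hfj : f (finRotate m i0) = ⟨0, by omega⟩ := Fin.ext hb
    by_cases hcase : finRotate m (finRotate m i0) = i0
    · have hEj := hedge (finRotate m i0)
      rw [hcase] at hEj
      simp only [DnAdj] at hEj
      omega
    · apply h
      refine ⟨?_, f (finRotate m (finRotate m i0)), ?_, ?_, ?_⟩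
      · rw [← hfi0, ← hfj]; exact hc i0 (finRotate m i0)
      · intro he
        exact finRotate_ne_self' hm (finRotate m i0)
          (hinj (Fin.ext (he.trans hb.symm)))
      · intro he
        exact hcase (hinj (Fin.ext (he.trans ha.symm)))
      · rw [← hfj]; exact hc (finRotate m (finRotate m i0)) (finRotate m i0)

/-- middle vertices are in bijection with `Fin (n-2)` -/
def midEquiv (n : ℕ) (hn : 2 ≤ n) :
    Fin (n - 2) ≃ {i : Fin n // i.1 ≠ 0 ∧ i.1 ≠ n - 1} where
  toFun j := ⟨⟨j.1 + 1, by have := j.isLt; omega⟩, by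
    have := j.isLt
    constructor
    · simp
    · simp; omega⟩
  invFun m := ⟨m.1.1 - 1, by have := m.1.isLt; have := m.2; omega⟩
  left_inv j := by apply Fin.ext; simp
  right_inv m := by
    apply Subtype.ext; apply Fin.ext
    have := m.2
    simp
    omega

/-- vertices other than the last one are in bijection with `Fin (n-1)` -/
def lastNeEquiv (n : ℕ) (hn : 2 ≤ n) :
    Fin (n - 1) ≃ {j : Fin n // j.1 ≠ n - 1} where
  toFun j := ⟨⟨j.1, by have := j.isLt; omega⟩, by have := j.isLt; simp; omega⟩
  invFun m := ⟨m.1.1, by have := m.1.isLt; have := m.2; omega⟩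
  left_inv j := by apply Fin.ext; simp
  right_inv m := by apply Subtype.ext; apply Fin.ext; simp

/-- colors other than `a` are in bijection with `Fin (k-1)` -/
def finNeEquiv (k : ℕ) (a : Fin k) : {y : Fin k // y ≠ a} ≃ Fin (k - 1) where
  toFun y := ⟨if y.1.1 < a.1 then y.1.1 else y.1.1 - 1, by
    have h1 := y.1.isLt
    have h2 := a.isLt
    have h3 : y.1.1 ≠ a.1 := fun he => y.2 (Fin.ext he)
    split <;> omega⟩
  invFun z := ⟨⟨if z.1 < a.1 then z.1 else z.1 + 1, by
      have h1 := z.isLt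
      have h2 := a.isLt
      split <;> omega⟩, by
    intro he
    have h3 := congrArg Fin.val he
    have h1 := z.isLt
    simp only at h3
    split at h3 <;> omega⟩
  left_inv y := by
    apply Subtype.ext; apply Fin.ext
    have h1 := y.1.isLt
    have h3 : y.1.1 ≠ a.1 := fun he => y.2 (Fin.ext he)
    simp only
    split_ifs <;> omega
  right_inv z := by
    apply Fin.ext
    have h1 := z.isLt
    simp only
    split_ifs <;> omega

/-- the key sigma decomposition of properly colored maps with endpoints equal -/
def sigEquiv (n k : ℕ) (hn : 2 ≤ n) :
    {c : Fin n → Fin k // c ⟨n - 1, by omega⟩ = c ⟨0, by omega⟩ ∧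
        ∀ i : Fin n, i.1 ≠ 0 → i.1 ≠ n - 1 → c i ≠ c ⟨0, by omega⟩} ≃
      Σ a : Fin k, ({i : Fin n // i.1 ≠ 0 ∧ i.1 ≠ n - 1} → {y : Fin k // y ≠ a}) where
  toFun c := ⟨c.1 ⟨0, by omega⟩, fun i => ⟨c.1 i.1, c.2.2 i.1 i.2.1 i.2.2⟩⟩
  invFun p := ⟨fun i => if h0 : i.1 = 0 then p.1 else if h1 : i.1 = n - 1 then p.1
      else (p.2 ⟨i, h0, h1⟩).1, by
    constructor
    · have hne : n - 1 ≠ 0 := by omega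
      simp [hne]
    · intro i h0 h1
      simp only [dif_neg h0, dif_neg h1, dif_pos rfl]
      exact (p.2 ⟨i, h0, h1⟩).2⟩
  left_inv c := by
    apply Subtype.ext
    funext i
    by_cases h0 : i.1 = 0
    · simp only [dif_pos h0]
      have hi : i = ⟨0, by omega⟩ := Fin.ext h0
      rw [hi]
    · by_cases h1 : i.1 = n - 1
      · simp only [dif_neg h0, dif_pos h1]
        rw [← c.2.1]
        have hi : i = ⟨n - 1, by omega⟩ := Fin.ext h1
        rw [hi]
      · simp only [dif_neg h0, dif_neg h1]
  right_inv p := by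
    obtain ⟨a, g⟩ := p
    refine Sigma.ext rfl (heq_of_eq ?_)
    funext i
    apply Subtype.ext
    simp only [dif_neg i.2.1, dif_neg i.2.2]

/-- unpacking nested subtypes -/
def subSubEquiv {α : Type*} (P Q : α → Prop) :
    {x : {x // P x} // Q x.1} ≃ {x // P x ∧ Q x} :=
  ⟨fun x => ⟨x.1.1, x.1.2, x.2⟩, fun x => ⟨⟨x.1, x.2.1⟩, x.2.2⟩,
    fun _ => rfl, fun _ => rfl⟩

/-- colorings with endpoints equal correspond to colorings of all but the last vertex -/
def eqEquiv (n k : ℕ) (hn : 2 ≤ n) :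
    {c : Fin n → Fin k // c ⟨0, by omega⟩ = c ⟨n - 1, by omega⟩} ≃
      ({j : Fin n // j.1 ≠ n - 1} → Fin k) where
  toFun c j := c.1 j.1
  invFun g := ⟨fun i => if h : i.1 = n - 1 then
      g ⟨⟨0, by omega⟩, by simp; omega⟩
      else g ⟨i, h⟩, by
    have h1 : ¬ ((⟨0, by omega⟩ : Fin n).1 = n - 1) := by simp; omega
    have h2 : ((⟨n - 1, by omega⟩ : Fin n)).1 = n - 1 := rfl
    simp only [dif_neg h1, dif_pos h2]
    simp⟩
  left_inv c := by
    apply Subtype.ext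
    funext i
    by_cases h : i.1 = n - 1
    · simp only [dif_pos h]
      have hi : i = ⟨n - 1, by omega⟩ := Fin.ext h
      rw [hi]
      exact c.2
    · simp only [dif_neg h]
  right_inv g := by
    funext j
    simp only [dif_neg j.2]

lemma card_ne_color {k : ℕ} (a : Fin k) :
    Fintype.card {y : Fin k // y ≠ a} = k - 1 :=
  (Fintype.card_congr (finNeEquiv k a)).trans (Fintype.card_fin _)

/-- For Dₙ: P_{v₁≈vₙ}(Dₙ;k) = k(k−1)^(n−2), P_{v₁≉vₙ}(Dₙ;k) = k^(n−1)(k−1), and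
P(Dₙ;k) = k(k−1)^(n−2) + k^(n−1)(k−1). -/
theorem stmt_18 (n : ℕ) (hn : 2 ≤ n) (k : ℕ) (hk : 0 < k) :
    Nat.card {c : Fin n → Fin k //
        ProperColoring (DnAdj n) c ∧ c ⟨0, by omega⟩ = c ⟨n - 1, by omega⟩}
      = k * (k - 1) ^ (n - 2) ∧
    Nat.card {c : Fin n → Fin k //
        ProperColoring (DnAdj n) c ∧ c ⟨0, by omega⟩ ≠ c ⟨n - 1, by omega⟩}
      = k ^ (n - 1) * (k - 1) ∧
    numColorings (Fin n) (DnAdj n) k = k * (k - 1) ^ (n - 2) + k ^ (n - 1) * (k - 1) := by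
  classical
  have hv0 : 0 < n := by omega
  have hv1 : n - 1 < n := by omega
  -- Part A: endpoints equal
  have hA : Nat.card {c : Fin n → Fin k //
      ProperColoring (DnAdj n) c ∧ c ⟨0, hv0⟩ = c ⟨n - 1, hv1⟩}
      = k * (k - 1) ^ (n - 2) := by
    have e1 : {c : Fin n → Fin k //
        ProperColoring (DnAdj n) c ∧ c ⟨0, hv0⟩ = c ⟨n - 1, hv1⟩} ≃
        {c : Fin n → Fin k // c ⟨n - 1, hv1⟩ = c ⟨0, hv0⟩ ∧
          ∀ i : Fin n, i.1 ≠ 0 → i.1 ≠ n - 1 → c i ≠ c ⟨0, hv0⟩} := by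
      refine Equiv.subtypeEquivRight fun c => ?_
      rw [properColoring_DnAdj_iff hn]
      constructor
      · rintro ⟨hp, he⟩
        exact ⟨he.symm, fun i h0 h1 hic => hp ⟨he.symm, i, h0, h1, hic⟩⟩
      · rintro ⟨he, hno⟩
        refine ⟨?_, he.symm⟩
        rintro ⟨h1, i, hi0, hi1, hic⟩
        exact hno i hi0 hi1 hic
    rw [Nat.card_congr e1, Nat.card_congr (sigEquiv n k hn),
      Nat.card_eq_fintype_card, Fintype.card_sigma]
    have hterm : ∀ a : Fin k,
        Fintype.card ({i : Fin n // i.1 ≠ 0 ∧ i.1 ≠ n - 1} → {y : Fin k // y ≠ a})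
          = (k - 1) ^ (n - 2) := by
      intro a
      rw [Fintype.card_fun, card_ne_color,
        Fintype.card_congr (midEquiv n hn).symm, Fintype.card_fin]
    rw [Finset.sum_congr rfl fun a _ => hterm a, Finset.sum_const, Finset.card_univ,
      Fintype.card_fin, smul_eq_mul]
  -- count of all colorings with endpoints equal
  have hEq : Nat.card {c : Fin n → Fin k // c ⟨0, hv0⟩ = c ⟨n - 1, hv1⟩}
      = k ^ (n - 1) := by
    rw [Nat.card_congr (eqEquiv n k hn), Nat.card_eq_fintype_card, Fintype.card_fun,
      Fintype.card_fin, Fintype.card_congr (lastNeEquiv n hn).symm, Fintype.card_fin]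
  -- splitting lemma
  have hsplit : ∀ P : (Fin n → Fin k) → Prop,
      Nat.card {c : Fin n → Fin k // P c} + Nat.card {c : Fin n → Fin k // ¬ P c}
        = k ^ n := by
    intro P
    rw [← Nat.card_sum, Nat.card_congr (Equiv.sumCompl P), Nat.card_eq_fintype_card,
      Fintype.card_fun, Fintype.card_fin, Fintype.card_fin]
  -- Part B: endpoints different
  have hB : Nat.card {c : Fin n → Fin k //
      ProperColoring (DnAdj n) c ∧ c ⟨0, hv0⟩ ≠ c ⟨n - 1, hv1⟩}
      = k ^ (n - 1) * (k - 1) := by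
    have e2 : {c : Fin n → Fin k //
        ProperColoring (DnAdj n) c ∧ c ⟨0, hv0⟩ ≠ c ⟨n - 1, hv1⟩} ≃
        {c : Fin n → Fin k // ¬ (c ⟨0, hv0⟩ = c ⟨n - 1, hv1⟩)} := by
      refine Equiv.subtypeEquivRight fun c => ?_
      constructor
      · exact fun h => h.2
      · intro hne
        refine ⟨(properColoring_DnAdj_iff hn c).2 ?_, hne⟩
        rintro ⟨h1, -⟩
        exact hne h1.symm
    obtain ⟨k', rfl⟩ : ∃ k', k = k' + 1 := ⟨k - 1, (Nat.succ_pred_eq_of_pos hk).symm⟩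
    have hn1 : n - 1 + 1 = n := Nat.succ_pred_eq_of_pos hv0
    have hpow : (k' + 1) ^ n = (k' + 1) ^ (n - 1) * (k' + 1) := by
      conv_lhs => rw [← hn1]
      rw [pow_succ]
    have hcomp := hsplit (fun c => c ⟨0, hv0⟩ = c ⟨n - 1, hv1⟩)
    rw [hEq, hpow, Nat.mul_succ] at hcomp
    rw [Nat.card_congr e2]
    simp only [Nat.add_sub_cancel]
    rw [Nat.add_comm ((k' + 1) ^ (n - 1) * k') ((k' + 1) ^ (n - 1))] at hcomp
    exact Nat.add_left_cancel hcomp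
  refine ⟨hA, hB, ?_⟩
  -- total count
  have e3 := Equiv.sumCompl (p := fun c : {c : Fin n → Fin k // ProperColoring (DnAdj n) c} =>
    c.1 ⟨0, hv0⟩ = c.1 ⟨n - 1, hv1⟩)
  have htot : numColorings (Fin n) (DnAdj n) k
      = Nat.card {c : Fin n → Fin k //
          ProperColoring (DnAdj n) c ∧ c ⟨0, hv0⟩ = c ⟨n - 1, hv1⟩}
        + Nat.card {c : Fin n → Fin k //
          ProperColoring (DnAdj n) c ∧ ¬ (c ⟨0, hv0⟩ = c ⟨n - 1, hv1⟩)} := by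
    rw [numColorings, ← Nat.card_congr e3, Nat.card_sum]
    congr 1
    · exact Nat.card_congr
        (subSubEquiv (ProperColoring (DnAdj n)) (fun c => c ⟨0, hv0⟩ = c ⟨n - 1, hv1⟩))
    · exact Nat.card_congr
        (subSubEquiv (ProperColoring (DnAdj n)) (fun c => ¬ (c ⟨0, hv0⟩ = c ⟨n - 1, hv1⟩)))
  rw [htot, hA, hB]
end
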